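/- Let (g,D) be a difference Lie algebra over a field k and let (V,ϱ,K) be a representation of (g,D). Define a bilinear bracket on g × V by B((x,u),(y,v)) = (⁅x,y⁆, ϱ(x)v − ϱ(y)u) and a linear map Δ(x,u) = (D x, K u). Then B is alternating and satisfies the Jacobi identity B(B(X,Y),Z) + B(B(Y,Z),X) + B(B(Z,X),Y) = 0 for all X,Y,Z ∈ g × V, and Δ is a difference operator for this bracket: Δ(B(X,Y)) = B(ΔX, Y) + B(X, ΔY) + B(ΔX, ΔY) for all X,Y ∈ g × V. Thus (g ⊕ V, B, Δ) is a difference Lie algebra, the semidirect product of (g,D) with (V,ϱ,K). -/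

import Mathlib

section

variable {k : Type*} [Field k] {g : Type*} [LieRing g] [LieAlgebra k g]
  {V : Type*} [AddCommGroup V] [Module k V]

/-- The semidirect product bracket on `g × V`:
`B((x,u),(y,v)) = (⁅x,y⁆, ϱ(x)v − ϱ(y)u)`. -/
def sdpBracket (ϱ : g →ₗ[k] Module.End k V) (X Y : g × V) : g × V :=
  (⁅X.1, Y.1⁆, ϱ X.1 Y.2 - ϱ Y.1 X.2)

/-- The semidirect product operator on `g × V`: `Δ(x,u) = (D x, K u)`. -/
def sdpOp (D : g →ₗ[k] g) (K : V →ₗ[k] V) (X : g × V) : g × V :=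
  (D X.1, K X.2)

end

section

variable {k : Type*} [Field k] {g : Type*} [LieRing g] [LieAlgebra k g]
  {V : Type*} [AddCommGroup V] [Module k V]

theorem lie_lie_add_lie_lie_add_lie_lie (x y z : g) :
    ⁅⁅x, y⁆, z⁆ + ⁅⁅y, z⁆, x⁆ + ⁅⁅z, x⁆, y⁆ = 0 := by
  rw [← lie_skew ⁅x, y⁆ z, ← lie_skew ⁅y, z⁆ x, ← lie_skew ⁅z, x⁆ y, ← neg_add, ← neg_add,
    neg_eq_zero, ← lie_jacobi x y z]
  abel

theorem sdpBracket_self (ϱ : g →ₗ[k] Module.End k V) (X : g × V) : sdpBracket ϱ X X = 0 := by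
  simp [sdpBracket]

theorem sdpBracket_jacobi (ϱ : g →ₗ[k] Module.End k V)
    (hrep : ∀ x y : g, ϱ ⁅x, y⁆ = ϱ x ∘ₗ ϱ y - ϱ y ∘ₗ ϱ x) (X Y Z : g × V) :
    sdpBracket ϱ (sdpBracket ϱ X Y) Z + sdpBracket ϱ (sdpBracket ϱ Y Z) X +
      sdpBracket ϱ (sdpBracket ϱ Z X) Y = 0 := by
  obtain ⟨x, u⟩ := X
  obtain ⟨y, v⟩ := Y
  obtain ⟨z, w⟩ := Z
  simp only [sdpBracket, Prod.mk_add_mk, Prod.mk_eq_zero, lie_lie_add_lie_lie_add_lie_lie, hrep,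
    map_sub, LinearMap.sub_apply, LinearMap.comp_apply, true_and]
  abel

theorem sdpOp_sdpBracket (D : g →ₗ[k] g)
    (hD : ∀ x y : g, D ⁅x, y⁆ = ⁅D x, y⁆ + ⁅x, D y⁆ + ⁅D x, D y⁆)
    (ϱ : g →ₗ[k] Module.End k V) (K : V →ₗ[k] V)
    (hK : ∀ (x : g) (u : V), K (ϱ x u) = ϱ (D x) u + ϱ x (K u) + ϱ (D x) (K u))
    (X Y : g × V) :
    sdpOp D K (sdpBracket ϱ X Y) =
      sdpBracket ϱ (sdpOp D K X) Y + sdpBracket ϱ X (sdpOp D K Y) +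
        sdpBracket ϱ (sdpOp D K X) (sdpOp D K Y) := by
  simp only [sdpBracket, sdpOp, Prod.mk_add_mk, Prod.ext_iff, hD, map_sub, hK, true_and]
  abel

end

/-- For a difference Lie algebra `(g, D)` and a representation `(V, ϱ, K)`, the semidirect
product bracket `B` on `g ⊕ V` is alternating and satisfies the Jacobi identity, and
`Δ(x,u) = (D x, K u)` is a difference operator for it; thus `(g ⊕ V, B, Δ)` is a difference
Lie algebra, the semidirect product of `(g, D)` with `(V, ϱ, K)`. -/
theorem semidirectProduct_is_difference_lie_algebra {k : Type*} [Field k] {g : Type*}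
    [LieRing g] [LieAlgebra k g] {V : Type*} [AddCommGroup V] [Module k V]
    (D : g →ₗ[k] g)
    (hD : ∀ x y : g, D ⁅x, y⁆ = ⁅D x, y⁆ + ⁅x, D y⁆ + ⁅D x, D y⁆)
    (ϱ : g →ₗ[k] Module.End k V)
    (hrep : ∀ x y : g, ϱ ⁅x, y⁆ = ϱ x ∘ₗ ϱ y - ϱ y ∘ₗ ϱ x)
    (K : V →ₗ[k] V)
    (hK : ∀ (x : g) (u : V), K (ϱ x u) = ϱ (D x) u + ϱ x (K u) + ϱ (D x) (K u)) :
    (∀ X : g × V, sdpBracket ϱ X X = 0) ∧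
    (∀ X Y Z : g × V,
      sdpBracket ϱ (sdpBracket ϱ X Y) Z + sdpBracket ϱ (sdpBracket ϱ Y Z) X +
        sdpBracket ϱ (sdpBracket ϱ Z X) Y = 0) ∧
    (∀ X Y : g × V,
      sdpOp D K (sdpBracket ϱ X Y) =
        sdpBracket ϱ (sdpOp D K X) Y + sdpBracket ϱ X (sdpOp D K Y) +
          sdpBracket ϱ (sdpOp D K X) (sdpOp D K Y)) :=
  ⟨sdpBracket_self ϱ, sdpBracket_jacobi ϱ hrep, sdpOp_sdpBracket D hD ϱ K hK⟩
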